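/- Let n ≥ 2, 0 < R₀ < R₁, μ ∈ ℝ, and let f : [R₀, R₁] → ℝ be a nonzero C² solution of f''(r) + ((n−1)/r) f'(r) − ((n−1)/r²) f(r) = −μ f(r) with f(R₀) = f(R₁) = 0 and f > 0 on (R₀, R₁). Then for each unit vector e ∈ ℝⁿ, the function u(x) = f(|x|)(x·e)/|x|, defined on the spherical shell Ω = {x : R₀ < |x| < R₁}, satisfies Δu = −μ u in Ω and u = 0 on ∂Ω, and u changes sign in Ω (it is positive where x·e > 0 and negative where x·e < 0). -/

import Mathlib

/-!
Write `u x = φ ‖x‖ * ⟪x, e⟫` with `φ r = f r / r`. Its gradient is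
`φ r • e + (φ' r / r * ⟪x, e⟫) • x`, and tracing the second derivative over an orthonormal basis
gives `Δu = (φ'' + (n + 1) φ' / r) ⟪x, e⟫`. For `φ = f / r` the factor equals
`(f'' + (n - 1) f' / r - (n - 1) f / r²) / r`, which is `-μ f / r` by the radial equation.
The boundary values and the sign of `u` are those of `f` and of `⟪x, e⟫`.
-/

open scoped RealInnerProductSpace Topology

noncomputable def lap {n : ℕ} (u : EuclideanSpace ℝ (Fin n) → ℝ)
    (x : EuclideanSpace ℝ (Fin n)) : ℝ :=
  ∑ i, fderiv ℝ (fun y => fderiv ℝ u y (EuclideanSpace.single i 1)) x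
    (EuclideanSpace.single i 1)

section Radial

variable {E : Type*} [NormedAddCommGroup E] [InnerProductSpace ℝ E]

theorem hasFDerivAt_norm {x : E} (hx : x ≠ 0) :
    HasFDerivAt (‖·‖) (‖x‖⁻¹ • innerSL ℝ x) x := by
  have hsqrt := (hasStrictFDerivAt_norm_sq x).hasFDerivAt.sqrt (by positivity)
  simp only [Real.sqrt_sq (norm_nonneg _)] at hsqrt
  refine hsqrt.congr_fderiv ?_
  have : ‖x‖ ≠ 0 := norm_ne_zero_iff.mpr hx
  ext v
  simp only [smul_apply, innerSL_apply_apply, smul_eq_mul, nsmul_eq_mul]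
  field_simp
  ring

theorem HasDerivAt.hasFDerivAt_comp_norm {g : ℝ → ℝ} {g' : ℝ} {x : E}
    (hg : HasDerivAt g g' ‖x‖) (hx : x ≠ 0) :
    HasFDerivAt (fun y => g ‖y‖) ((g' / ‖x‖) • innerSL ℝ x) x := by
  refine (hg.comp_hasFDerivAt x (hasFDerivAt_norm hx)).congr_fderiv ?_
  rw [smul_smul, div_eq_mul_inv]

theorem hasFDerivAt_inner_left (e x : E) :
    HasFDerivAt (fun y => ⟪y, e⟫) (innerSL ℝ e) x := by
  have h : (fun y => ⟪y, e⟫) = innerSL ℝ e := funext fun y => real_inner_comm e y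
  rw [h]
  exact (innerSL ℝ e).hasFDerivAt

theorem hasFDerivAt_radial_mul_inner {φ : ℝ → ℝ} {φ' : ℝ} {x : E} (e : E)
    (hφ : HasDerivAt φ φ' ‖x‖) (hx : x ≠ 0) :
    HasFDerivAt (fun y => φ ‖y‖ * ⟪y, e⟫)
      (φ ‖x‖ • innerSL ℝ e + (φ' / ‖x‖ * ⟪x, e⟫) • innerSL ℝ x) x := by
  refine ((hφ.hasFDerivAt_comp_norm hx).mul (hasFDerivAt_inner_left e x)).congr_fderiv ?_
  rw [smul_smul, mul_comm (φ' / ‖x‖), add_comm]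

theorem fderiv_fderiv_radial_mul_inner_apply {φ φ' : ℝ → ℝ} {φ'' : ℝ} {x : E}
    (hφ : ∀ᶠ r in 𝓝 ‖x‖, HasDerivAt φ (φ' r) r) (hφ' : HasDerivAt φ' φ'' ‖x‖) (hx : x ≠ 0)
    (e v : E) :
    fderiv ℝ (fun y => fderiv ℝ (fun z => φ ‖z‖ * ⟪z, e⟫) y v) x v =
      2 * (φ' ‖x‖ / ‖x‖) * (⟪x, v⟫ * ⟪e, v⟫)
        + (φ'' - φ' ‖x‖ / ‖x‖) / ‖x‖ ^ 2 * ⟪x, e⟫ * ⟪x, v⟫ ^ 2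
        + φ' ‖x‖ / ‖x‖ * ⟪x, e⟫ * ‖v‖ ^ 2 := by
  have hfirst : (fun y => fderiv ℝ (fun z => φ ‖z‖ * ⟪z, e⟫) y v) =ᶠ[𝓝 x]
      fun y => φ ‖y‖ * ⟪e, v⟫ + φ' ‖y‖ / ‖y‖ * ⟪y, e⟫ * ⟪y, v⟫ := by
    filter_upwards [continuous_norm.continuousAt.eventually hφ,
      isOpen_ne.mem_nhds hx] with y hy hy0
    rw [(hasFDerivAt_radial_mul_inner e hy hy0).fderiv]
    simp only [add_apply, smul_apply, innerSL_apply_apply, smul_eq_mul]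
  have hr : ‖x‖ ≠ 0 := norm_ne_zero_iff.mpr hx
  have hψ : HasDerivAt (fun r => φ' r / r) ((φ'' * ‖x‖ - φ' ‖x‖) / ‖x‖ ^ 2) ‖x‖ :=
    (hφ'.div (hasDerivAt_id' _) hr).congr_deriv (by simp)
  have hsecond : HasFDerivAt (fun y => φ ‖y‖ * ⟪e, v⟫ + φ' ‖y‖ / ‖y‖ * ⟪y, e⟫ * ⟪y, v⟫) _ x :=
    ((hφ.self_of_nhds.hasFDerivAt_comp_norm hx).mul_const ⟪e, v⟫).add
      (((hψ.hasFDerivAt_comp_norm hx).mul (hasFDerivAt_inner_left e x)).mul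
        (hasFDerivAt_inner_left v x))
  rw [hfirst.fderiv_eq, hsecond.fderiv]
  simp only [add_apply, smul_apply, innerSL_apply_apply, smul_eq_mul, Pi.mul_apply,
    real_inner_self_eq_norm_sq]
  field_simp
  ring

end Radial

theorem lap_radial_mul_inner {n : ℕ} {φ φ' : ℝ → ℝ} {φ'' : ℝ} {x : EuclideanSpace ℝ (Fin n)}
    (e : EuclideanSpace ℝ (Fin n))
    (hφ : ∀ᶠ r in 𝓝 ‖x‖, HasDerivAt φ (φ' r) r) (hφ' : HasDerivAt φ' φ'' ‖x‖) (hx : x ≠ 0) :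
    lap (fun y => φ ‖y‖ * ⟪y, e⟫) x = (φ'' + (n + 1) * (φ' ‖x‖ / ‖x‖)) * ⟪x, e⟫ := by
  let b := EuclideanSpace.basisFun (Fin n) ℝ
  have hb : ∀ i, b i = EuclideanSpace.single i 1 := EuclideanSpace.basisFun_apply (Fin n) ℝ
  have hxe : ∑ i, ⟪x, b i⟫ * ⟪e, b i⟫ = ⟪x, e⟫ := by
    simpa only [real_inner_comm] using b.sum_inner_mul_inner x e
  have hxx : ∑ i, ⟪x, b i⟫ ^ 2 = ‖x‖ ^ 2 := by
    simpa only [real_inner_comm, sq, real_inner_self_eq_norm_mul_norm] using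
      b.sum_inner_mul_inner x x
  have hr : ‖x‖ ≠ 0 := norm_ne_zero_iff.mpr hx
  unfold lap
  simp only [← hb, fderiv_fderiv_radial_mul_inner_apply hφ hφ' hx, b.orthonormal.1, one_pow,
    mul_one, Finset.sum_add_distrib, ← Finset.mul_sum, hxe, hxx, Finset.sum_const,
    Finset.card_univ, Fintype.card_fin, nsmul_eq_mul]
  field_simp
  ring

theorem lap_div_norm_mul_inner {n : ℕ} {f : ℝ → ℝ} {x : EuclideanSpace ℝ (Fin n)}
    (e : EuclideanSpace ℝ (Fin n)) (hf : ContDiffAt ℝ 2 f ‖x‖) (hx : x ≠ 0) :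
    lap (fun y => f ‖y‖ * ⟪y, e⟫ / ‖y‖) x =
      (deriv (deriv f) ‖x‖ + ((n : ℝ) - 1) / ‖x‖ * deriv f ‖x‖
        - ((n : ℝ) - 1) / ‖x‖ ^ 2 * f ‖x‖) * ⟪x, e⟫ / ‖x‖ := by
  have hr : ‖x‖ ≠ 0 := norm_ne_zero_iff.mpr hx
  have hf' : ∀ᶠ r in 𝓝 ‖x‖, HasDerivAt f (deriv f r) r :=
    (hf.eventually (by simp)).mono fun r hfr => (hfr.differentiableAt two_ne_zero).hasDerivAt
  have hf'' : HasDerivAt (deriv f) (deriv (deriv f) ‖x‖) ‖x‖ :=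
    ((hf.derivWithin (m := 1) (by norm_num)).differentiableAt one_ne_zero).hasDerivAt
  have hφ : ∀ᶠ r in 𝓝 ‖x‖,
      HasDerivAt (fun s => f s / s) ((deriv f r * r - f r) / r ^ 2) r := by
    filter_upwards [hf', eventually_ne_nhds hr] with r hfr hr0
    exact (hfr.div (hasDerivAt_id' r) hr0).congr_deriv (by simp)
  have hφ' : HasDerivAt (fun s => (deriv f s * s - f s) / s ^ 2)
      ((deriv (deriv f) ‖x‖ * ‖x‖ ^ 2 - 2 * (deriv f ‖x‖ * ‖x‖ - f ‖x‖)) / ‖x‖ ^ 3) ‖x‖ := by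
    refine (((hf''.mul (hasDerivAt_id' _)).sub hf'.self_of_nhds).div
      (hasDerivAt_pow 2 ‖x‖) (pow_ne_zero 2 hr)).congr_deriv ?_
    simp only [Pi.sub_apply, Pi.mul_apply]
    field_simp
    ring
  have hu : (fun y => f ‖y‖ * ⟪y, e⟫ / ‖y‖) = fun y => f ‖y‖ / ‖y‖ * ⟪y, e⟫ := by
    funext y; ring
  rw [hu, lap_radial_mul_inner e hφ hφ' hx]
  field_simp
  ring

theorem frontier_shell_subset {E : Type*} [SeminormedAddCommGroup E] {R0 R1 : ℝ}
    (h : R0 < R1) : frontier {x : E | R0 < ‖x‖ ∧ ‖x‖ < R1} ⊆ {x | ‖x‖ = R0 ∨ ‖x‖ = R1} := by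
  refine (continuous_norm.frontier_preimage_subset (Set.Ioo R0 R1)).trans ?_
  rw [frontier_Ioo h]
  exact fun x hx => hx

theorem stmt18_general {n : ℕ} (R0 R1 μ : ℝ) (h0 : 0 < R0) (h01 : R0 < R1)
    (f : ℝ → ℝ) (hf : ContDiffOn ℝ 2 f (Set.Icc R0 R1))
    (hode : ∀ r ∈ Set.Ioo R0 R1,
      deriv (deriv f) r + ((n : ℝ) - 1) / r * deriv f r
        - ((n : ℝ) - 1) / r ^ 2 * f r = -μ * f r)
    (hfa : f R0 = 0) (hfb : f R1 = 0)
    (hfpos : ∀ r ∈ Set.Ioo R0 R1, 0 < f r)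
    (e : EuclideanSpace ℝ (Fin n))
    (u : EuclideanSpace ℝ (Fin n) → ℝ)
    (hu : ∀ x, u x = f ‖x‖ * ⟪x, e⟫ / ‖x‖)
    (Ω : Set (EuclideanSpace ℝ (Fin n)))
    (hΩ : Ω = {x | R0 < ‖x‖ ∧ ‖x‖ < R1}) :
    (∀ x ∈ Ω, lap u x = -μ * u x) ∧
    (∀ x ∈ frontier Ω, u x = 0) ∧
    (∀ x ∈ Ω, (0 < ⟪x, e⟫ → 0 < u x) ∧ (⟪x, e⟫ < 0 → u x < 0)) := by
  obtain rfl : u = fun x => f ‖x‖ * ⟪x, e⟫ / ‖x‖ := funext hu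
  subst hΩ
  refine ⟨fun x hx => ?_, fun x hx => ?_, fun x hx => ⟨fun hxe => ?_, fun hxe => ?_⟩⟩
  · have hx0 : x ≠ 0 := norm_pos_iff.mp (h0.trans hx.1)
    rw [lap_div_norm_mul_inner e (hf.contDiffAt (Icc_mem_nhds hx.1 hx.2)) hx0, hode _ hx]
    ring
  · rcases frontier_shell_subset h01 hx with h | h <;> simp [h, hfa, hfb]
  · exact div_pos (mul_pos (hfpos _ hx) hxe) (h0.trans hx.1)
  · exact div_neg_of_neg_of_pos (mul_neg_of_pos_of_neg (hfpos _ hx) hxe) (h0.trans hx.1)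

/-- from a positive solution `f` of the radial equation with angular
eigenvalue `n − 1`, vanishing at `R₀` and `R₁`, the function `u(x) = f(|x|)(x·e)/|x|`
is a sign-changing Dirichlet eigenfunction of the spherical shell with eigenvalue `μ`. -/
theorem stmt18 {n : ℕ} (hn : 2 ≤ n) (R0 R1 μ : ℝ) (h0 : 0 < R0) (h01 : R0 < R1)
    (f : ℝ → ℝ) (hf : ContDiffOn ℝ 2 f (Set.Icc R0 R1))
    (hode : ∀ r ∈ Set.Ioo R0 R1,
      deriv (deriv f) r + ((n : ℝ) - 1) / r * deriv f r
        - ((n : ℝ) - 1) / r ^ 2 * f r = -μ * f r)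
    (hfa : f R0 = 0) (hfb : f R1 = 0)
    (hfpos : ∀ r ∈ Set.Ioo R0 R1, 0 < f r)
    (e : EuclideanSpace ℝ (Fin n)) (he : ‖e‖ = 1)
    (u : EuclideanSpace ℝ (Fin n) → ℝ)
    (hu : ∀ x, u x = f ‖x‖ * ⟪x, e⟫ / ‖x‖)
    (Ω : Set (EuclideanSpace ℝ (Fin n)))
    (hΩ : Ω = {x | R0 < ‖x‖ ∧ ‖x‖ < R1}) :
    (∀ x ∈ Ω, lap u x = -μ * u x) ∧
    (∀ x ∈ frontier Ω, u x = 0) ∧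
    (∀ x ∈ Ω, (0 < ⟪x, e⟫ → 0 < u x) ∧ (⟪x, e⟫ < 0 → u x < 0)) :=
  stmt18_general R0 R1 μ h0 h01 f hf hode hfa hfb hfpos e u hu Ω hΩ
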